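/- arXiv:2101.01616 — 4 statements merged into one kernel-verified Lean document; each statement's English description precedes it below -/
import Mathlib

section
/- Let U : ℝⁿ → ℝ be a smooth function with ∫ e^{−U} dx < ∞. Then for every smooth compactly supported f : ℝⁿ → ℝ, ∫ f²(|∇U|² − 2ΔU) e^{−U} dx ≤ 4 ∫ |∇f|² e^{−U} dx. -/
open MeasureTheory Real RealInnerProductSpace

noncomputable def lap {n : ℕ} (U : EuclideanSpace ℝ (Fin n) → ℝ)
    (x : EuclideanSpace ℝ (Fin n)) : ℝ :=
  ∑ i : Fin n, iteratedFDeriv ℝ 2 U x (fun _ => EuclideanSpace.single i (1 : ℝ))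

/-- The integral of a directional derivative of a `C¹` compactly supported function
vanishes. -/
lemma aux_integral_fderiv_zero {n : ℕ} {h : EuclideanSpace ℝ (Fin n) → ℝ}
    (hh : ContDiff ℝ 1 h) (hc : HasCompactSupport h) (v : EuclideanSpace ℝ (Fin n)) :
    ∫ x, fderiv ℝ h x v = 0 := by
  have h1 : Integrable (fun x : EuclideanSpace ℝ (Fin n) =>
      fderiv ℝ (fun _ : EuclideanSpace ℝ (Fin n) => (1:ℝ)) x v * h x) volume := by
    simp only [fderiv_fun_const, Pi.zero_apply, ContinuousLinearMap.zero_apply, zero_mul]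
    exact integrable_zero _ _ _
  have hcont : Continuous fun x => fderiv ℝ h x v :=
    (hh.continuous_fderiv (by simp)).clm_apply continuous_const
  have h2 : Integrable (fun x : EuclideanSpace ℝ (Fin n) => (1:ℝ) * fderiv ℝ h x v) volume := by
    simp only [one_mul]
    exact hcont.integrable_of_hasCompactSupport (hc.fderiv_apply ℝ v)
  have h3 : Integrable (fun x : EuclideanSpace ℝ (Fin n) => (1:ℝ) * h x) volume := by
    simp only [one_mul]
    exact hh.continuous.integrable_of_hasCompactSupport hc
  have := integral_mul_fderiv_eq_neg_fderiv_mul_of_integrable (μ := volume)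
    (f := fun _ : EuclideanSpace ℝ (Fin n) => (1:ℝ)) (g := h) (v := v) h1 h2 h3
    (fun x _ => differentiableAt_const (1:ℝ)) (fun x _ => hh.differentiable (by simp) x)
  simpa using this

/-- Expansion of the square (U-bound):
∫ f² (|∇U|² − 2ΔU) e^{−U} ≤ 4 ∫ |∇f|² e^{−U}. -/
theorem expansion_of_the_square {n : ℕ}
    (U : EuclideanSpace ℝ (Fin n) → ℝ) (hU : ContDiff ℝ 2 U)
    (hint : Integrable (fun x => Real.exp (-U x)) volume)
    (f : EuclideanSpace ℝ (Fin n) → ℝ)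
    (hf : ContDiff ℝ (⊤ : ℕ∞) f) (hfc : HasCompactSupport f) :
    ∫ x, f x ^ 2 * (‖gradient U x‖ ^ 2 - 2 * lap U x) * Real.exp (-U x)
      ≤ 4 * ∫ x, ‖gradient f x‖ ^ 2 * Real.exp (-U x) := by
  classical
  set e : Fin n → EuclideanSpace ℝ (Fin n) := fun i => EuclideanSpace.single i (1:ℝ) with he
  -- coordinates of gradients
  have hcoord : ∀ (g : EuclideanSpace ℝ (Fin n) → ℝ) (x : EuclideanSpace ℝ (Fin n)) (i : Fin n),
      gradient g x i = fderiv ℝ g x (e i) := by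
    intro g x i
    have h1 : ⟪gradient g x, e i⟫ = fderiv ℝ g x (e i) := by
      rw [gradient]
      exact InnerProductSpace.toDual_symm_apply
    rw [he] at h1
    rw [EuclideanSpace.inner_single_right] at h1
    simpa using h1
  have hnorm : ∀ (g : EuclideanSpace ℝ (Fin n) → ℝ) (x : EuclideanSpace ℝ (Fin n)),
      ‖gradient g x‖ ^ 2 = ∑ i, (fderiv ℝ g x (e i)) ^ 2 := by
    intro g x
    rw [EuclideanSpace.norm_eq, Real.sq_sqrt (by positivity)]
    exact Finset.sum_congr rfl fun i _ => by
      rw [Real.norm_eq_abs, sq_abs, hcoord g x i]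
  -- second derivatives
  have hlap : ∀ x, lap U x = ∑ i, fderiv ℝ (fderiv ℝ U) x (e i) (e i) := by
    intro x
    exact Finset.sum_congr rfl fun i _ => by rw [iteratedFDeriv_two_apply]
  -- differentiability
  have hfd : Differentiable ℝ f := hf.differentiable (by simp)
  have hUd : Differentiable ℝ U := hU.differentiable (by simp)
  have hU1 : ContDiff ℝ 1 (fderiv ℝ U) := hU.fderiv_right (by norm_num)
  have hUdd : Differentiable ℝ (fderiv ℝ U) := hU1.differentiable (by simp)
  -- continuity
  have hcρ : Continuous fun x => Real.exp (-U x) :=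
    Real.continuous_exp.comp hUd.continuous.neg
  have hcDf : ∀ i, Continuous fun x => fderiv ℝ f x (e i) := fun i =>
    (hf.continuous_fderiv (by simp)).clm_apply continuous_const
  have hcDU : ∀ i, Continuous fun x => fderiv ℝ U x (e i) := fun i =>
    (hU.continuous_fderiv (by simp)).clm_apply continuous_const
  have hcH : ∀ i, Continuous fun x => fderiv ℝ (fderiv ℝ U) x (e i) (e i) := fun i =>
    ((hU1.continuous_fderiv (by simp)).clm_apply continuous_const).clm_apply continuous_const
  -- the vector field components
  set V : Fin n → EuclideanSpace ℝ (Fin n) → ℝ :=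
    fun i y => f y ^ 2 * (Real.exp (-U y) * fderiv ℝ U y (e i)) with hV
  -- key pointwise derivative computation
  have hkey : ∀ (i : Fin n) (x), fderiv ℝ (V i) x (e i)
      = 2 * f x * fderiv ℝ f x (e i) * Real.exp (-U x) * fderiv ℝ U x (e i)
        + f x ^ 2 * Real.exp (-U x) * fderiv ℝ (fderiv ℝ U) x (e i) (e i)
        - f x ^ 2 * Real.exp (-U x) * fderiv ℝ U x (e i) * fderiv ℝ U x (e i) := by
    intro i x
    have hF1 : HasFDerivAt (fun y => f y ^ 2)
        (f x • fderiv ℝ f x + f x • fderiv ℝ f x) x := by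
      have := ((hfd x).hasFDerivAt).mul ((hfd x).hasFDerivAt)
      rw [show (fun y => f y ^ 2) = f * f from funext fun y => pow_two (f y)]
      exact this
    have hneg : HasFDerivAt (fun y => -U y) (-(fderiv ℝ U x)) x := (hUd x).hasFDerivAt.neg
    have hF2 : HasFDerivAt (fun y => Real.exp (-U y))
        (Real.exp (-U x) • (-(fderiv ℝ U x))) x :=
      by have := (Real.hasDerivAt_exp (-U x)).comp_hasFDerivAt x hneg; exact this
    have hF3 : HasFDerivAt (fun y => fderiv ℝ U y (e i))
        ((fderiv ℝ (fderiv ℝ U) x).flip (e i)) x := by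
      have := ((hUdd x).hasFDerivAt.clm_apply (hasFDerivAt_const (e i) x))
      simpa using this
    have hprod : HasFDerivAt (fun y => Real.exp (-U y) * fderiv ℝ U y (e i))
        (Real.exp (-U x) • ((fderiv ℝ (fderiv ℝ U) x).flip (e i))
          + fderiv ℝ U x (e i) • (Real.exp (-U x) • (-(fderiv ℝ U x)))) x := hF2.mul hF3
    have hFV : HasFDerivAt (V i)
        (f x ^ 2 • (Real.exp (-U x) • ((fderiv ℝ (fderiv ℝ U) x).flip (e i))
            + fderiv ℝ U x (e i) • (Real.exp (-U x) • (-(fderiv ℝ U x))))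
          + (Real.exp (-U x) * fderiv ℝ U x (e i)) • (f x • fderiv ℝ f x + f x • fderiv ℝ f x)) x :=
      hF1.mul hprod
    rw [hFV.fderiv]
    simp only [ContinuousLinearMap.add_apply, ContinuousLinearMap.smul_apply,
      ContinuousLinearMap.neg_apply, ContinuousLinearMap.flip_apply, smul_eq_mul,
      Nat.cast_ofNat, pow_one]
    ring
  -- C¹ and compact support of V i
  have hρ1 : ContDiff ℝ 1 fun x => Real.exp (-U x) :=
    Real.contDiff_exp.comp (hU.of_le one_le_two).neg
  have hVcd : ∀ i, ContDiff ℝ 1 (V i) := by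
    intro i
    exact ((hf.of_le (by simp)).pow 2).mul (hρ1.mul (hU1.clm_apply contDiff_const))
  have hVcs : ∀ i, HasCompactSupport (V i) := by
    intro i
    apply HasCompactSupport.intro hfc.isCompact
    intro x hx
    have : f x = 0 := image_eq_zero_of_notMem_tsupport hx
    simp [hV, this]
  -- divergence integrates to zero
  have hdiv : ∀ i, ∫ x, fderiv ℝ (V i) x (e i) = 0 := fun i =>
    aux_integral_fderiv_zero (hVcd i) (hVcs i) (e i)
  -- abbreviations for integrands
  set W : EuclideanSpace ℝ (Fin n) → ℝ := fun x => ∑ i,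
      (2 * f x * fderiv ℝ f x (e i) * Real.exp (-U x) * fderiv ℝ U x (e i)
        + f x ^ 2 * Real.exp (-U x) * fderiv ℝ (fderiv ℝ U) x (e i) (e i)
        - f x ^ 2 * Real.exp (-U x) * fderiv ℝ U x (e i) * fderiv ℝ U x (e i)) with hWdef
  set Q : EuclideanSpace ℝ (Fin n) → ℝ := fun x =>
      (∑ i, (fderiv ℝ f x (e i) - f x / 2 * fderiv ℝ U x (e i)) ^ 2) * Real.exp (-U x) with hQdef
  set R : EuclideanSpace ℝ (Fin n) → ℝ := fun x =>
      (∑ i, (fderiv ℝ f x (e i)) ^ 2) * Real.exp (-U x) with hRdef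
  set L : EuclideanSpace ℝ (Fin n) → ℝ := fun x =>
      f x ^ 2 * ((∑ i, (fderiv ℝ U x (e i)) ^ 2)
        - 2 * ∑ i, fderiv ℝ (fderiv ℝ U) x (e i) (e i)) * Real.exp (-U x) with hLdef
  -- integrability
  have hWint : ∀ i : Fin n, Integrable (fun x =>
      2 * f x * fderiv ℝ f x (e i) * Real.exp (-U x) * fderiv ℝ U x (e i)
        + f x ^ 2 * Real.exp (-U x) * fderiv ℝ (fderiv ℝ U) x (e i) (e i)
        - f x ^ 2 * Real.exp (-U x) * fderiv ℝ U x (e i) * fderiv ℝ U x (e i)) volume := by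
    intro i
    apply Continuous.integrable_of_hasCompactSupport
    · exact ((((continuous_const.mul hf.continuous).mul (hcDf i)).mul hcρ).mul (hcDU i)).add
        (((hf.continuous.pow 2).mul hcρ).mul (hcH i)) |>.sub
        ((((hf.continuous.pow 2).mul hcρ).mul (hcDU i)).mul (hcDU i))
    · apply HasCompactSupport.intro hfc.isCompact
      intro x hx
      have : f x = 0 := image_eq_zero_of_notMem_tsupport hx
      simp [this]
  have hQint : Integrable Q volume := by
    apply Continuous.integrable_of_hasCompactSupport
    · exact (continuous_finset_sum _ fun i _ =>
        ((hcDf i).sub ((hf.continuous.div_const 2).mul (hcDU i))).pow 2).mul hcρ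
    · apply HasCompactSupport.intro (hfc.isCompact.union (hfc.fderiv ℝ).isCompact)
      intro x hx
      have hx1 : f x = 0 := image_eq_zero_of_notMem_tsupport fun h => hx (Set.mem_union_left _ h)
      have hx2 : fderiv ℝ f x = 0 := image_eq_zero_of_notMem_tsupport
        fun h => hx (Set.mem_union_right _ h)
      simp [hQdef, hx1, hx2]
  have hRint : Integrable R volume := by
    apply Continuous.integrable_of_hasCompactSupport
    · exact (continuous_finset_sum _ fun i _ => (hcDf i).pow 2).mul hcρ
    · apply HasCompactSupport.intro (hfc.fderiv ℝ).isCompact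
      intro x hx
      have hx2 : fderiv ℝ f x = 0 := image_eq_zero_of_notMem_tsupport hx
      simp [hRdef, hx2]
  have hLint : Integrable L volume := by
    apply Continuous.integrable_of_hasCompactSupport
    · exact ((hf.continuous.pow 2).mul
        ((continuous_finset_sum _ fun i _ => (hcDU i).pow 2).sub
          (continuous_const.mul (continuous_finset_sum _ fun i _ => hcH i)))).mul hcρ
    · apply HasCompactSupport.intro hfc.isCompact
      intro x hx
      have : f x = 0 := image_eq_zero_of_notMem_tsupport hx
      simp [hLdef, this]
  -- ∫ W = 0
  have hWzero : ∫ x, W x = 0 := by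
    simp only [hWdef]
    rw [integral_finset_sum _ fun i _ => hWint i]
    refine Finset.sum_eq_zero fun i _ => ?_
    rw [show (fun x => 2 * f x * fderiv ℝ f x (e i) * Real.exp (-U x) * fderiv ℝ U x (e i)
        + f x ^ 2 * Real.exp (-U x) * fderiv ℝ (fderiv ℝ U) x (e i) (e i)
        - f x ^ 2 * Real.exp (-U x) * fderiv ℝ U x (e i) * fderiv ℝ U x (e i))
      = fun x => fderiv ℝ (V i) x (e i) from funext fun x => (hkey i x).symm]
    exact hdiv i
  have hWint' : Integrable W volume := by
    simp only [hWdef]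
    exact integrable_finset_sum _ fun i _ => hWint i
  -- pointwise identity : 4•R - L = 4•Q + 2•W
  have hpt : ∀ x, 4 * R x - L x = 4 * Q x + 2 * W x := by
    intro x
    have e1 : ∑ i, (fderiv ℝ f x (e i) - f x / 2 * fderiv ℝ U x (e i)) ^ 2
        = (∑ i, (fderiv ℝ f x (e i)) ^ 2)
          - f x * (∑ i, fderiv ℝ f x (e i) * fderiv ℝ U x (e i))
          + f x ^ 2 / 4 * (∑ i, (fderiv ℝ U x (e i)) ^ 2) := by
      rw [Finset.mul_sum, Finset.mul_sum, ← Finset.sum_sub_distrib, ← Finset.sum_add_distrib]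
      exact Finset.sum_congr rfl fun i _ => by ring
    have e2 : W x
        = 2 * f x * Real.exp (-U x) * (∑ i, fderiv ℝ f x (e i) * fderiv ℝ U x (e i))
          + f x ^ 2 * Real.exp (-U x) * (∑ i, fderiv ℝ (fderiv ℝ U) x (e i) (e i))
          - f x ^ 2 * Real.exp (-U x) * (∑ i, (fderiv ℝ U x (e i)) ^ 2) := by
      simp only [hWdef]
      rw [Finset.mul_sum, Finset.mul_sum, Finset.mul_sum, ← Finset.sum_add_distrib,
        ← Finset.sum_sub_distrib]
      exact Finset.sum_congr rfl fun i _ => by ring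
    simp only [hQdef, hRdef, hLdef]
    rw [e2, e1]
    ring
  -- conclude
  have hfin : 4 * (∫ x, R x) - ∫ x, L x = 4 * ∫ x, Q x := by
    have h1 : ∫ x, (4 * R x - L x) = ∫ x, (4 * Q x + 2 * W x) := by
      exact integral_congr_ae (Filter.Eventually.of_forall hpt)
    rw [integral_add (hQint.const_mul 4) (hWint'.const_mul 2)] at h1
    rw [integral_sub (hRint.const_mul 4) hLint] at h1
    rw [integral_const_mul, integral_const_mul, integral_const_mul] at h1
    rw [h1, hWzero]
    ring
  have hQpos : 0 ≤ ∫ x, Q x := by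
    apply integral_nonneg
    intro x
    simp only [hQdef]
    positivity
  have hmain : ∫ x, L x ≤ 4 * ∫ x, R x := by linarith
  -- rewrite original integrals
  have hLrw : (fun x => f x ^ 2 * (‖gradient U x‖ ^ 2 - 2 * lap U x) * Real.exp (-U x)) = L := by
    funext x
    simp only [hLdef]
    rw [hnorm U x, hlap x]
  have hRrw : (fun x => ‖gradient f x‖ ^ 2 * Real.exp (-U x)) = R := by
    funext x
    simp only [hRdef]
    rw [hnorm f x]
  rw [hLrw, hRrw]
  exact hmain
end

section
/- Let μ be a probability measure and (Φ_t)_{t≥0} a family of Young functions, each a continuous increasing bijection of [0,∞), such that for every x > 0 the map t ↦ Φ_t(x) tends to +∞ as t → ∞ when x > x₀ and Φ_t(x₀) = 1 for all t, and Φ_t ≤ Φ_s on (0,x₀) for t ≥ s. Then for any bounded measurable f, lim_{t→∞} ‖f‖_{Φ_t} = ‖f‖_∞ / x₀. -/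
/-!
Since `|f| / (M / x₀) ≤ x₀` and `Φ_t x₀ = 1`, the level `M / x₀` is admissible for every `Φ_t`, so
`‖f‖_{Φ_t} ≤ M / x₀`. Conversely, for `l < M / x₀` pick `c` with `x₀ l < c < M`: the set
`A = {c ≤ |f|}` has positive measure and `Φ_t (c / l) → ∞`, so eventually `Φ_t (c / l) μ(A) > 1`,
and then no level `m < l` is admissible, i.e. `l ≤ ‖f‖_{Φ_t}`.
-/

open MeasureTheory Set Filter

noncomputable def luxNorm {α : Type*} [MeasurableSpace α] (μ : Measure α)
    (Φ : ℝ → ℝ) (f : α → ℝ) : ℝ :=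
  sInf {l : ℝ | 0 < l ∧ ∫ x, Φ (|f x| / l) ∂μ ≤ 1}

section

variable {α : Type*} [MeasurableSpace α] {μ : Measure α} {Φ : ℝ → ℝ} {f : α → ℝ} {M l : ℝ}

theorem luxNorm_le_of_integral_le (hl : 0 < l) (h : ∫ x, Φ (|f x| / l) ∂μ ≤ 1) :
    luxNorm μ Φ f ≤ l :=
  csInf_le ⟨0, fun _ hm => hm.1.le⟩ ⟨hl, h⟩

theorem le_luxNorm_of_forall_lt (hne : ∃ m, 0 < m ∧ ∫ x, Φ (|f x| / m) ∂μ ≤ 1)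
    (h : ∀ m, 0 < m → m < l → 1 < ∫ x, Φ (|f x| / m) ∂μ) : l ≤ luxNorm μ Φ f :=
  le_csInf hne fun m ⟨hm, hint⟩ => not_lt.1 fun hml => (h m hm hml).not_ge hint

section Monotone

variable (hΦ : MonotoneOn Φ (Ici 0)) (hΦ0 : 0 ≤ Φ 0)
include hΦ hΦ0

theorem MonotoneOn.nonneg_of_nonneg_zero {x : ℝ} (hx : 0 ≤ x) : 0 ≤ Φ x :=
  hΦ0.trans (hΦ self_mem_Ici hx hx)

theorem integrable_comp_abs_div [IsFiniteMeasure μ] (hΦm : Measurable Φ) (hf : Measurable f)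
    (hbound : ∀ x, |f x| ≤ M) (hl : 0 < l) : Integrable (fun x => Φ (|f x| / l)) μ := by
  refine (integrable_const (Φ (M / l))).mono' (hΦm.comp (hf.abs.div_const l)).aestronglyMeasurable
    (.of_forall fun x => ?_)
  have hx : 0 ≤ |f x| / l := by positivity
  rw [Real.norm_of_nonneg (hΦ.nonneg_of_nonneg_zero hΦ0 hx)]
  exact hΦ hx (hx.trans (by gcongr; exact hbound x)) (by gcongr; exact hbound x)

theorem integral_comp_abs_div_le_one [IsProbabilityMeasure μ] (hΦm : Measurable Φ)
    (hf : Measurable f) (hbound : ∀ x, |f x| ≤ M) {x₀ : ℝ} (hx₀ : 0 < x₀) (hΦx₀ : Φ x₀ = 1)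
    (hM : 0 < M) : ∫ x, Φ (|f x| / (M / x₀)) ∂μ ≤ 1 := by
  have hL : 0 < M / x₀ := div_pos hM hx₀
  have hle : ∀ x, Φ (|f x| / (M / x₀)) ≤ 1 := fun x => by
    rw [← hΦx₀]
    refine hΦ (mem_Ici.2 (by positivity)) hx₀.le ?_
    rw [div_le_iff₀ hL, mul_div_cancel₀ M hx₀.ne']
    exact hbound x
  calc ∫ x, Φ (|f x| / (M / x₀)) ∂μ
      ≤ ∫ _, (1 : ℝ) ∂μ := integral_mono (integrable_comp_abs_div hΦ hΦ0 hΦm hf hbound hL)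
        (integrable_const 1) hle
    _ = 1 := by simp

theorem one_lt_integral_comp_abs_div [IsFiniteMeasure μ] (hΦm : Measurable Φ) (hf : Measurable f)
    (hbound : ∀ x, |f x| ≤ M) {c m : ℝ} (hc : 0 ≤ c) (hm : 0 < m) (hml : m ≤ l)
    (hΦc : 1 < Φ (c / l) * μ.real {x | c ≤ |f x|}) : 1 < ∫ x, Φ (|f x| / m) ∂μ := by
  have hl : 0 < l := hm.trans_le hml
  have hint := integrable_comp_abs_div hΦ hΦ0 hΦm hf hbound (μ := μ) hm
  calc 1 < Φ (c / l) * μ.real {x | c ≤ |f x|} := hΦc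
    _ ≤ ∫ x in {x | c ≤ |f x|}, Φ (|f x| / m) ∂μ :=
      setIntegral_ge_of_const_le_real (measurableSet_le measurable_const hf.abs)
        (measure_ne_top μ _)
        (fun x hx => hΦ (mem_Ici.2 (by positivity)) (mem_Ici.2 (by positivity))
          (div_le_div₀ (abs_nonneg _) hx hm hml)) hint.integrableOn
    _ ≤ ∫ x, Φ (|f x| / m) ∂μ :=
      setIntegral_le_integral hint
        (.of_forall fun x => hΦ.nonneg_of_nonneg_zero hΦ0 (by positivity))

theorem le_luxNorm_of_one_lt_mul_measure [IsFiniteMeasure μ] (hΦm : Measurable Φ)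
    (hf : Measurable f) (hbound : ∀ x, |f x| ≤ M) (hne : ∃ m, 0 < m ∧ ∫ x, Φ (|f x| / m) ∂μ ≤ 1)
    {c : ℝ} (hc : 0 ≤ c) (hΦc : 1 < Φ (c / l) * μ.real {x | c ≤ |f x|}) : l ≤ luxNorm μ Φ f :=
  le_luxNorm_of_forall_lt hne fun _ hm hml =>
    one_lt_integral_comp_abs_div hΦ hΦ0 hΦm hf hbound hc hm hml.le hΦc

end Monotone

end

theorem luxNorm_tendsto_sup_norm_general {α : Type*} [MeasurableSpace α] (μ : Measure α)
    [IsProbabilityMeasure μ]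
    (Φ : ℝ → ℝ → ℝ) (x₀ : ℝ) (hx₀ : 0 < x₀)
    (hYoung : ∀ t, 0 ≤ t → ConvexOn ℝ (Ici 0) (Φ t) ∧ Φ t 0 = 0 ∧
      StrictMonoOn (Φ t) (Ici 0) ∧ Continuous (Φ t))
    (hone : ∀ t, 0 ≤ t → Φ t x₀ = 1)
    (hblow : ∀ x, x₀ < x → Tendsto (fun t => Φ t x) atTop atTop)
    (f : α → ℝ) (hmeas : Measurable f) (M : ℝ) (hM : 0 < M)
    (hbound : ∀ x, |f x| ≤ M)
    (hpos : ∀ ε : ℝ, 0 < ε → ε < 1 → 0 < μ {x | (1 - ε) * M ≤ |f x|}) :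
    Tendsto (fun t => luxNorm μ (Φ t) f) atTop (nhds (M / x₀)) := by
  have hL : 0 < M / x₀ := div_pos hM hx₀
  have hΦ t (ht : 0 ≤ t) := (hYoung t ht).2.2.1.monotoneOn
  have hΦ0 t (ht : 0 ≤ t) := (hYoung t ht).2.1.ge
  have hΦm t (ht : 0 ≤ t) := (hYoung t ht).2.2.2.measurable
  have hadm : ∀ t, 0 ≤ t → ∫ x, Φ t (|f x| / (M / x₀)) ∂μ ≤ 1 := fun t ht =>
    integral_comp_abs_div_le_one (hΦ t ht) (hΦ0 t ht) (hΦm t ht) hmeas hbound hx₀ (hone t ht) hM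
  refine tendsto_order.2 ⟨fun a ha => ?_, fun a ha => ?_⟩
  · obtain ⟨l, hal, hlL⟩ := exists_between (max_lt ha hL)
    have hl : 0 < l := (le_max_right a 0).trans_lt hal
    obtain ⟨c, hxc, hcM⟩ := exists_between ((lt_div_iff₀' hx₀).1 hlL)
    have hc : 0 < c := (mul_pos hx₀ hl).trans hxc
    have hA : 0 < μ.real {x | c ≤ |f x|} := by
      have := hpos (1 - c / M) (sub_pos.2 ((div_lt_one hM).2 hcM)) (sub_lt_self _ (div_pos hc hM))
      rw [sub_sub_cancel, div_mul_cancel₀ c hM.ne'] at this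
      exact ENNReal.toReal_pos this.ne' (measure_ne_top μ _)
    filter_upwards [eventually_ge_atTop 0,
      (hblow (c / l) ((lt_div_iff₀ hl).2 hxc)).eventually_gt_atTop (μ.real {x | c ≤ |f x|})⁻¹]
      with t ht hΦt
    exact ((le_max_left a 0).trans_lt hal).trans_le <|
      le_luxNorm_of_one_lt_mul_measure (hΦ t ht) (hΦ0 t ht) (hΦm t ht) hmeas hbound
        ⟨M / x₀, hL, hadm t ht⟩ hc.le ((inv_lt_iff_one_lt_mul₀ hA).1 hΦt)
  · filter_upwards [eventually_ge_atTop 0] with t ht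
    exact (luxNorm_le_of_integral_le hL (hadm t ht)).trans_lt ha

/-- As t → ∞ the Luxembourg norms ‖f‖_{Φ_t} converge to ‖f‖_∞ / x₀. -/
theorem luxNorm_tendsto_sup_norm {α : Type*} [MeasurableSpace α] (μ : Measure α)
    [IsProbabilityMeasure μ]
    (Φ : ℝ → ℝ → ℝ) (x₀ : ℝ) (hx₀ : 0 < x₀)
    (hYoung : ∀ t, 0 ≤ t → ConvexOn ℝ (Ici 0) (Φ t) ∧ Φ t 0 = 0 ∧
      StrictMonoOn (Φ t) (Ici 0) ∧ Continuous (Φ t))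
    (hone : ∀ t, 0 ≤ t → Φ t x₀ = 1)
    (hblow : ∀ x, x₀ < x → Tendsto (fun t => Φ t x) atTop atTop)
    (hmono : ∀ s t, 0 ≤ s → s ≤ t → ∀ x, 0 < x → x < x₀ → Φ t x ≤ Φ s x)
    (f : α → ℝ) (hmeas : Measurable f) (M : ℝ) (hM : 0 < M)
    (hbound : ∀ x, |f x| ≤ M)
    (hpos : ∀ ε : ℝ, 0 < ε → ε < 1 → 0 < μ {x | (1 - ε) * M ≤ |f x|}) :
    Tendsto (fun t => luxNorm μ (Φ t) f) atTop (nhds (M / x₀)) :=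
  luxNorm_tendsto_sup_norm_general μ Φ x₀ hx₀ hYoung hone hblow f hmeas M hM hbound hpos
end

section
/- With Φ, H, U as above (Φ(x) = 2x log x + 1 for |x|≥1, x² for |x|≤1; U = Φ∘H^{−1}), it holds that U(x) ≤ x²/2 for |x| ≤ √2 and U(x) ≤ N(x) := x² log(1+x²) for |x| ≥ √2. -/
noncomputable def PhiLL (x : ℝ) : ℝ :=
  if |x| ≤ 1 then x ^ 2 else 2 * |x| * Real.log |x| + 1

noncomputable def Hinv (y : ℝ) : ℝ :=
  if y ≤ Real.sqrt 2 then y / Real.sqrt 2 else (y + Real.sqrt 2) ^ 2 / 8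

noncomputable def Ufun (x : ℝ) : ℝ := PhiLL (Hinv |x|)

/-- U(x) ≤ x²/2 for |x| ≤ √2 and U(x) ≤ x² log(1+x²) for |x| ≥ √2. -/
theorem U_upper_bound (x : ℝ) :
    (|x| ≤ Real.sqrt 2 → Ufun x ≤ x ^ 2 / 2) ∧
    (Real.sqrt 2 ≤ |x| → Ufun x ≤ x ^ 2 * Real.log (1 + x ^ 2)) := by
  have hs2 : (0:ℝ) < Real.sqrt 2 := Real.sqrt_pos.mpr (by norm_num)
  have hsq : Real.sqrt 2 ^ 2 = 2 := Real.sq_sqrt (by norm_num)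
  have habs : |x| ^ 2 = x ^ 2 := sq_abs x
  constructor
  · intro h
    have h1 : Hinv |x| = |x| / Real.sqrt 2 := by rw [Hinv, if_pos h]
    have h2 : abs (|x| / Real.sqrt 2) ≤ 1 := by
      rw [abs_div, abs_of_nonneg (abs_nonneg x), abs_of_pos hs2]
      rw [div_le_one hs2]; exact h
    rw [Ufun, h1, PhiLL, if_pos h2, div_pow, hsq, habs]
  · intro h
    rcases eq_or_lt_of_le h with heq | hlt
    · have h1 : Hinv |x| = 1 := by
        rw [Hinv, if_pos heq.symm.le, ← heq, div_self hs2.ne']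
      have hx2 : x ^ 2 = 2 := by rw [← habs, ← heq, hsq]
      rw [Ufun, h1, PhiLL, if_pos (by norm_num), hx2]
      have hlog : (1:ℝ)/2 ≤ Real.log (1 + 2) := by
        have h2 : Real.log 2 ≤ Real.log 3 :=
          Real.log_le_log (by norm_num) (by norm_num)
        have := Real.log_two_gt_d9
        norm_num at *
        linarith
      norm_num; linarith
    · set t := |x| with ht
      have ht0 : 0 < t := lt_trans hs2 hlt
      have h1 : Hinv t = (t + Real.sqrt 2) ^ 2 / 8 := by
        rw [Hinv, if_neg (not_le.mpr hlt)]
      set u := (t + Real.sqrt 2) ^ 2 / 8 with hu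
      have hu1 : 1 < u := by
        have h2 : 2 * Real.sqrt 2 < t + Real.sqrt 2 := by linarith
        have h3 : (2 * Real.sqrt 2) ^ 2 < (t + Real.sqrt 2) ^ 2 := by
          apply sq_lt_sq' (by nlinarith) h2
        rw [hu]; nlinarith
      have hu0 : (0:ℝ) < u := lt_trans one_pos hu1
      have hule : u ≤ t ^ 2 / 2 := by
        have : t + Real.sqrt 2 ≤ 2 * t := by linarith
        have h3 : (t + Real.sqrt 2) ^ 2 ≤ (2 * t) ^ 2 := by
          apply sq_le_sq' (by nlinarith) this
        rw [hu]; nlinarith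
      have hnot : ¬ (|u| ≤ 1) := by
        rw [abs_of_pos hu0]; linarith
      rw [Ufun, h1, PhiLL, if_neg hnot, abs_of_pos hu0]
      -- 2 u log u ≤ t² log(t²/2)
      have hv1 : (1:ℝ) ≤ t ^ 2 / 2 := le_trans hu1.le hule
      have hv0 : (0:ℝ) < t ^ 2 / 2 := lt_of_lt_of_le one_pos hv1
      have hlogu : 0 ≤ Real.log u := Real.log_nonneg hu1.le
      have hkey : u * Real.log u ≤ (t ^ 2 / 2) * Real.log (t ^ 2 / 2) := by
        apply mul_le_mul hule (Real.log_le_log hu0 hule) hlogu (by linarith)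
      -- t² log(1+t²) ≥ t² log(t²/2) + t² log 2 ≥ t² log(t²/2) + 1
      have hsplit : Real.log (t ^ 2 / 2) + Real.log 2 = Real.log (t ^ 2) := by
        rw [← Real.log_mul (by positivity) (by norm_num)]
        ring_nf
      have hmono : Real.log (t ^ 2) ≤ Real.log (1 + t ^ 2) :=
        Real.log_le_log (by positivity) (by linarith)
      have hlog2 : (1:ℝ)/2 < Real.log 2 := by
        have := Real.log_two_gt_d9; linarith
      have ht2 : (2:ℝ) ≤ t ^ 2 := by nlinarith [hsq, sq_le_sq' (by linarith) hlt.le]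
      have hfin : t ^ 2 * Real.log (t ^ 2 / 2) + 1 ≤ t ^ 2 * Real.log (1 + t ^ 2) := by
        have h5 : 1 ≤ t ^ 2 * Real.log 2 := by nlinarith
        nlinarith [mul_le_mul_of_nonneg_left hmono (by positivity : (0:ℝ) ≤ t ^ 2),
          mul_le_mul_of_nonneg_left (le_of_eq hsplit.symm) (by positivity : (0:ℝ) ≤ t ^ 2)]
      have hx2 : t ^ 2 = x ^ 2 := habs
      rw [← hx2]
      nlinarith [hkey]
end

section
/- Let γ be the standard Gaussian measure on ℝ and a ≥ 1, f_a(t) = e^{at/2}. With U the Young function defined from Φ(x)=2x log x+1 (|x|≥1), x² (|x|≤1) via U=Φ∘H^{−1}, the Luxembourg norm satisfies ‖f_a‖_U ≤ 2a e^{a²/4}. -/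
open MeasureTheory ProbabilityTheory

open scoped ENNReal NNReal

lemma exp_tilt (c x : ℝ) :
    gaussianPDFReal 0 1 x * Real.exp (c * x)
      = Real.exp (c ^ 2 / 2) * gaussianPDFReal c 1 x := by
  simp only [gaussianPDFReal, NNReal.coe_one, mul_one, sub_zero]
  rw [mul_assoc, ← Real.exp_add, mul_comm (Real.exp (c ^ 2 / 2)), mul_assoc, ← Real.exp_add]
  congr 1
  ring

lemma integrable_exp_gauss (c : ℝ) :
    Integrable (fun x => Real.exp (c * x)) (gaussianReal 0 1) := by
  rw [gaussianReal_of_var_ne_zero 0 one_ne_zero]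
  have hmeas : Measurable fun x => (gaussianPDFReal 0 1 x).toNNReal :=
    (measurable_gaussianPDFReal 0 1).real_toNNReal
  have hpdf : gaussianPDF 0 1 = fun x => ((gaussianPDFReal 0 1 x).toNNReal : ℝ≥0∞) := rfl
  rw [hpdf, integrable_withDensity_iff_integrable_coe_smul hmeas]
  have heq : (fun x => ((gaussianPDFReal 0 1 x).toNNReal : ℝ) • Real.exp (c * x))
      = fun x => Real.exp (c ^ 2 / 2) * gaussianPDFReal c 1 x := by
    funext x
    rw [smul_eq_mul, Real.coe_toNNReal _ (gaussianPDFReal_nonneg 0 1 x), exp_tilt]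
  rw [heq]
  exact (integrable_gaussianPDFReal c 1).const_mul _

lemma integral_exp_gauss (c : ℝ) :
    ∫ x, Real.exp (c * x) ∂(gaussianReal 0 1) = Real.exp (c ^ 2 / 2) := by
  rw [gaussianReal_of_var_ne_zero 0 one_ne_zero]
  have hmeas : Measurable fun x => (gaussianPDFReal 0 1 x).toNNReal :=
    (measurable_gaussianPDFReal 0 1).real_toNNReal
  have hpdf : gaussianPDF 0 1 = fun x => ((gaussianPDFReal 0 1 x).toNNReal : ℝ≥0∞) := rfl
  rw [hpdf, integral_withDensity_eq_integral_smul hmeas]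
  have heq : (fun x => (gaussianPDFReal 0 1 x).toNNReal • Real.exp (c * x))
      = fun x => Real.exp (c ^ 2 / 2) * gaussianPDFReal c 1 x := by
    funext x
    rw [NNReal.smul_def, smul_eq_mul,
      Real.coe_toNNReal _ (gaussianPDFReal_nonneg 0 1 x), exp_tilt]
  rw [heq, integral_const_mul, integral_gaussianPDFReal_eq_one c one_ne_zero, mul_one]

lemma PhiLL_nonneg (x : ℝ) : 0 ≤ PhiLL x := by
  unfold PhiLL
  split_ifs with h
  · positivity
  · push_neg at h
    have hlog : 0 ≤ Real.log |x| := Real.log_nonneg h.le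
    nlinarith [abs_nonneg x]

lemma Ufun_nonneg (x : ℝ) : 0 ≤ Ufun x := PhiLL_nonneg _

lemma Ufun_le (y : ℝ) (hy : 0 ≤ y) :
    Ufun y ≤ y ^ 2 / 2 + 2 * y ^ 2 * max (Real.log y) 0 := by
  have h2 : (0:ℝ) < Real.sqrt 2 := by positivity
  have hs2 : Real.sqrt 2 ^ 2 = 2 := Real.sq_sqrt (by norm_num)
  rw [Ufun, abs_of_nonneg hy, Hinv]
  split_ifs with h
  · have h1 : |y / Real.sqrt 2| ≤ 1 := by
      rw [abs_of_nonneg (by positivity), div_le_one h2]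
      exact h
    rw [PhiLL, if_pos h1, div_pow, hs2]
    have hpos : 0 ≤ 2 * y ^ 2 * max (Real.log y) 0 := by positivity
    linarith
  · push_neg at h
    have hsq1 : (1:ℝ) ≤ Real.sqrt 2 := by nlinarith
    have hy1 : 1 < y := lt_of_le_of_lt hsq1 h
    have h1u : 1 < (y + Real.sqrt 2) ^ 2 / 8 := by nlinarith
    rw [PhiLL, if_neg (by rw [abs_of_pos (by linarith)]; linarith),
      abs_of_pos (by linarith : (0:ℝ) < (y + Real.sqrt 2) ^ 2 / 8)]
    have hylog : 0 < Real.log y := Real.log_pos hy1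
    rw [max_eq_left hylog.le]
    have huy : (y + Real.sqrt 2) ^ 2 / 8 ≤ y ^ 2 / 2 := by nlinarith
    have hlogu : Real.log ((y + Real.sqrt 2) ^ 2 / 8) ≤ Real.log (y ^ 2 / 2) :=
      Real.log_le_log (by linarith) huy
    have hlogval : Real.log (y ^ 2 / 2) = 2 * Real.log y - Real.log 2 := by
      rw [Real.log_div (by positivity) (by norm_num), Real.log_pow]
      push_cast
      ring
    have hlogu0 : 0 < Real.log ((y + Real.sqrt 2) ^ 2 / 8) := Real.log_pos h1u
    have h2pos : 0 < Real.log 2 := Real.log_pos one_lt_two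
    have hy2 : 2 < y ^ 2 := by nlinarith
    nlinarith [mul_le_mul_of_nonneg_right huy hlogu0.le,
      mul_le_mul_of_nonneg_left (hlogu.trans_eq hlogval) (by positivity : (0:ℝ) ≤ y ^ 2)]

set_option maxHeartbeats 2000000 in
/-- For f_a(t)=e^{at/2} and the standard Gaussian, ‖f_a‖_U ≤ 2a·e^{a²/4}. -/
theorem luxNorm_U_exponential (a : ℝ) (ha : 1 ≤ a) :
    luxNorm (gaussianReal 0 1) Ufun (fun t => Real.exp (a * t / 2))
      ≤ 2 * a * Real.exp (a ^ 2 / 4) := by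
  have ha0 : 0 < a := lt_of_lt_of_le one_pos ha
  set l : ℝ := 2 * a * Real.exp (a ^ 2 / 4) with hl
  have hl1 : (1:ℝ) ≤ l := by
    have h1 : (1:ℝ) ≤ Real.exp (a ^ 2 / 4) := Real.one_le_exp (by positivity)
    nlinarith
  have hlpos : (0:ℝ) < l := lt_of_lt_of_le one_pos hl1
  have hl2 : l ^ 2 = 4 * a ^ 2 * Real.exp (a ^ 2 / 2) := by
    rw [hl, mul_pow, mul_pow, pow_two (Real.exp (a ^ 2 / 4)), ← Real.exp_add]
    rw [show a ^ 2 / 4 + a ^ 2 / 4 = a ^ 2 / 2 by ring]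
    norm_num
  set c2 : ℝ := a ^ 2 / Real.exp 1 / l ^ 2 with hc2
  set g : ℝ → ℝ := fun t => 1 / (2 * l ^ 2) * Real.exp (a * t)
      + (c2 * Real.exp ((a + 1/a) * t) + c2 * Real.exp ((a - 1/a) * t)) with hg
  clear_value l c2 g
  -- pointwise bound
  have hpt : ∀ t : ℝ, Ufun (|Real.exp (a * t / 2)| / l) ≤ g t := by
    intro t
    rw [abs_of_pos (Real.exp_pos _)]
    set y : ℝ := Real.exp (a * t / 2) / l with hy
    have hy0 : 0 ≤ y := by positivity
    have h1 := Ufun_le y hy0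
    have hy2 : y ^ 2 = Real.exp (a * t) / l ^ 2 := by
      rw [hy, div_pow]
      congr 1
      rw [pow_two, ← Real.exp_add]
      congr 1
      ring
    have hml : max (Real.log y) 0 ≤ a * |t| / 2 := by
      refine max_le ?_ (by positivity)
      have hle : Real.log y ≤ a * t / 2 := by
        rw [hy, Real.log_div (Real.exp_ne_zero _) (ne_of_gt hlpos), Real.log_exp]
        have := Real.log_nonneg hl1
        linarith
      have h2 : a * t / 2 ≤ a * |t| / 2 := by
        have := le_abs_self t
        nlinarith
      linarith
    have key : a * |t| ≤ a ^ 2 / Real.exp 1 * (Real.exp (t / a) + Real.exp (-(t / a))) := by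
      have h1' : |t| / a ≤ Real.exp (|t| / a) / Real.exp 1 := by
        have h := Real.add_one_le_exp (|t| / a - 1)
        rw [Real.exp_sub] at h
        linarith
      have h2' : Real.exp (|t| / a) ≤ Real.exp (t / a) + Real.exp (-(t / a)) := by
        rcases abs_cases t with ⟨h', _⟩ | ⟨h', _⟩
        · rw [h']
          linarith [Real.exp_pos (-(t / a))]
        · rw [h', neg_div]
          linarith [Real.exp_pos (t / a)]
      calc a * |t| = a ^ 2 * (|t| / a) := by field_simp
        _ ≤ a ^ 2 * (Real.exp (|t| / a) / Real.exp 1) :=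
            mul_le_mul_of_nonneg_left h1' (by positivity)
        _ = a ^ 2 / Real.exp 1 * Real.exp (|t| / a) := by ring
        _ ≤ a ^ 2 / Real.exp 1 * (Real.exp (t / a) + Real.exp (-(t / a))) :=
            mul_le_mul_of_nonneg_left h2' (by positivity)
    have A : 2 * y ^ 2 * max (Real.log y) 0 ≤ y ^ 2 * (a * |t|) := by
      have h := mul_le_mul_of_nonneg_left hml (by positivity : (0:ℝ) ≤ 2 * y ^ 2)
      nlinarith
    have B : y ^ 2 * (a * |t|)
        ≤ y ^ 2 * (a ^ 2 / Real.exp 1 * (Real.exp (t / a) + Real.exp (-(t / a)))) :=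
      mul_le_mul_of_nonneg_left key (by positivity)
    have C : Ufun y ≤ y ^ 2 / 2
        + y ^ 2 * (a ^ 2 / Real.exp 1 * (Real.exp (t / a) + Real.exp (-(t / a)))) := by
      linarith
    rw [hy2] at C
    have hD : Real.exp (a * t) / l ^ 2 / 2 + Real.exp (a * t) / l ^ 2
        * (a ^ 2 / Real.exp 1 * (Real.exp (t / a) + Real.exp (-(t / a)))) = g t := by
      have e1 : Real.exp (a * t) * Real.exp (t / a) = Real.exp ((a + 1/a) * t) := by
        rw [← Real.exp_add]
        congr 1
        field_simp
      have e2 : Real.exp (a * t) * Real.exp (-(t / a)) = Real.exp ((a - 1/a) * t) := by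
        rw [← Real.exp_add]
        congr 1
        field_simp
        ring
      rw [hg, hc2]
      dsimp only
      rw [← e1, ← e2]
      ring
    linarith [hD ▸ C]
  -- integrability
  have hgi1 : Integrable (fun t => 1 / (2 * l ^ 2) * Real.exp (a * t)) (gaussianReal 0 1) :=
    (integrable_exp_gauss a).const_mul _
  have hgi2 : Integrable (fun t => c2 * Real.exp ((a + 1/a) * t)) (gaussianReal 0 1) :=
    (integrable_exp_gauss _).const_mul _
  have hgi3 : Integrable (fun t => c2 * Real.exp ((a - 1/a) * t)) (gaussianReal 0 1) :=
    (integrable_exp_gauss _).const_mul _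
  have h23 : Integrable (fun t => c2 * Real.exp ((a + 1/a) * t)
      + c2 * Real.exp ((a - 1/a) * t)) (gaussianReal 0 1) := hgi2.add hgi3
  have hgint : Integrable g (gaussianReal 0 1) := by
    rw [hg]
    exact hgi1.add h23
  have hmono : ∫ t, Ufun (|Real.exp (a * t / 2)| / l) ∂(gaussianReal 0 1)
      ≤ ∫ t, g t ∂(gaussianReal 0 1) :=
    integral_mono_of_nonneg (Filter.Eventually.of_forall fun t => Ufun_nonneg _) hgint
      (Filter.Eventually.of_forall hpt)
  have hint : ∫ t, g t ∂(gaussianReal 0 1)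
      = 1 / (2 * l ^ 2) * Real.exp (a ^ 2 / 2)
        + (c2 * Real.exp ((a + 1/a) ^ 2 / 2) + c2 * Real.exp ((a - 1/a) ^ 2 / 2)) := by
    have s1 : ∫ t, g t ∂(gaussianReal 0 1)
        = (∫ t, 1 / (2 * l ^ 2) * Real.exp (a * t) ∂(gaussianReal 0 1))
          + ∫ t, (c2 * Real.exp ((a + 1/a) * t)
              + c2 * Real.exp ((a - 1/a) * t)) ∂(gaussianReal 0 1) := by
      rw [hg]
      exact integral_add hgi1 h23
    have s2 : ∫ t, (c2 * Real.exp ((a + 1/a) * t)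
          + c2 * Real.exp ((a - 1/a) * t)) ∂(gaussianReal 0 1)
        = (∫ t, c2 * Real.exp ((a + 1/a) * t) ∂(gaussianReal 0 1))
          + ∫ t, c2 * Real.exp ((a - 1/a) * t) ∂(gaussianReal 0 1) :=
      integral_add hgi2 hgi3
    rw [s1, s2, integral_const_mul, integral_const_mul, integral_const_mul,
      integral_exp_gauss, integral_exp_gauss, integral_exp_gauss]
  -- final numeric bound
  have hb1 : Real.exp ((a + 1/a) ^ 2 / 2)
      = Real.exp (a ^ 2 / 2) * (Real.exp (1 / (2 * a ^ 2)) * Real.exp 1) := by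
    rw [← Real.exp_add, ← Real.exp_add]
    congr 1
    field_simp
    ring
  have hb2 : Real.exp ((a - 1/a) ^ 2 / 2)
      = Real.exp (a ^ 2 / 2) * (Real.exp (1 / (2 * a ^ 2)) * Real.exp (-1)) := by
    rw [← Real.exp_add, ← Real.exp_add]
    congr 1
    field_simp
    ring
  have hX : Real.exp (1 / (2 * a ^ 2)) ≤ 2 := by
    have hs : 1 / (2 * a ^ 2) ≤ (1:ℝ) / 2 := by
      rw [div_le_div_iff₀ (by positivity) (by norm_num)]
      nlinarith
    have h12 : Real.exp (1 / (2 * a ^ 2)) ≤ Real.exp (1/2 : ℝ) := Real.exp_le_exp.mpr hs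
    have hsq : Real.exp (1/2 : ℝ) ^ 2 = Real.exp 1 := by
      rw [pow_two, ← Real.exp_add]
      norm_num
    nlinarith [Real.exp_pos (1/2 : ℝ), Real.exp_one_lt_d9]
  have hEM : Real.exp (-1 : ℝ) ≤ 1 := by
    have := Real.exp_le_exp.mpr (by norm_num : (-1:ℝ) ≤ 0)
    simpa using this
  have h2e : (2:ℝ) ≤ Real.exp 1 := by nlinarith [Real.add_one_le_exp (1:ℝ)]
  have heq : 1 / (2 * l ^ 2) * Real.exp (a ^ 2 / 2)
      + (c2 * (Real.exp (a ^ 2 / 2) * (Real.exp (1 / (2 * a ^ 2)) * Real.exp 1))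
        + c2 * (Real.exp (a ^ 2 / 2) * (Real.exp (1 / (2 * a ^ 2)) * Real.exp (-1))))
      = 1 / (8 * a ^ 2) + Real.exp (1 / (2 * a ^ 2)) / 4
        + Real.exp (1 / (2 * a ^ 2)) * Real.exp (-1) / (4 * Real.exp 1) := by
    rw [hc2, hl2]
    have hE1 : Real.exp (a ^ 2 / 2) ≠ 0 := Real.exp_ne_zero _
    have he1 : Real.exp (1:ℝ) ≠ 0 := Real.exp_ne_zero _
    field_simp
    ring
  have t1 : 1 / (8 * a ^ 2) ≤ (1:ℝ) / 8 := by
    rw [div_le_div_iff₀ (by positivity) (by norm_num)]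
    nlinarith
  have t2 : Real.exp (1 / (2 * a ^ 2)) / 4 ≤ (1:ℝ) / 2 := by linarith
  have t3 : Real.exp (1 / (2 * a ^ 2)) * Real.exp (-1) / (4 * Real.exp 1) ≤ (1:ℝ) / 4 := by
    have hXem : Real.exp (1 / (2 * a ^ 2)) * Real.exp (-1) ≤ 2 := by
      have h := mul_le_mul hX hEM (Real.exp_pos _).le (by norm_num)
      simpa using h
    rw [div_le_iff₀ (by positivity : (0:ℝ) < 4 * Real.exp 1)]
    linarith
  have hle1 : ∫ t, g t ∂(gaussianReal 0 1) ≤ 1 := by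
    rw [hint, hb1, hb2, heq]
    linarith
  -- conclude
  have hfinal : l ∈ {r : ℝ | 0 < r ∧
      ∫ x, Ufun (|(fun t => Real.exp (a * t / 2)) x| / r) ∂(gaussianReal 0 1) ≤ 1} :=
    ⟨hlpos, le_trans hmono hle1⟩
  exact csInf_le ⟨0, fun x hx => hx.1.le⟩ hfinal
end
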